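/- Let 𝒪 be the ring of integers of an imaginary quadratic field k of class number 1, Γ̄ = SU(2,1;𝒪), and 𝒬 the standard form with matrix C = [[0,0,1/√D],[0,1,0],[−1/√D,0,0]]. Suppose u and v are primitive isotropic vectors in 𝒪³ with |𝒬(u,v)|² = 1/|D|, and suppose u = (1,0,0)ᵀ. Then there exists γ ∈ Γ̄ stabilizing the line through (1,0,0)ᵀ such that γ·v is a unit multiple of (0,0,1)ᵀ. -/

import Mathlib

/-!
Since `𝒬(e₁, v) = q / √D`, the hypothesis on `|𝒬(e₁, v)|²` says `q q̄ = 1`, so `q` is a unit of `𝒪`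
and `v = q • (b, a, 1)` with `b = q̄ n`, `a = q̄ p`. Isotropy of `v` becomes `b̄ - b + √D |a|² = 0`,
which is exactly the condition for the Heisenberg translation `N(a, b)` to preserve the form. This
unipotent upper-triangular matrix fixes `e₁` and sends `(b, a, 1)` to `e₃`, hence `v` to `q • e₃`.
-/

open Matrix Complex ComplexConjugate

noncomputable def sqrtD (D : ℝ) : ℂ := Complex.I * Real.sqrt |D|

noncomputable def formC (D : ℝ) : Matrix (Fin 3) (Fin 3) ℂ :=
  !![0, 0, 1 / sqrtD D; 0, 1, 0; -(1 / sqrtD D), 0, 0]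

noncomputable def Qform (D : ℝ) (u v : Fin 3 → ℂ) : ℂ :=
  star u ⬝ᵥ (formC D).mulVec v

noncomputable def omegaD (D : ℤ) : ℂ := ((D : ℂ) + sqrtD (D : ℝ)) / 2

noncomputable def OO (D : ℤ) : Subring ℂ := Subring.closure {omegaD D}

lemma sqrtD_ne_zero {D : ℝ} (hD : D ≠ 0) : sqrtD D ≠ 0 :=
  mul_ne_zero I_ne_zero (ofReal_ne_zero.mpr (Real.sqrt_ne_zero'.mpr (abs_pos.mpr hD)))

lemma normSq_sqrtD (D : ℝ) : normSq (sqrtD D) = |D| := by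
  rw [sqrtD, normSq_mul, normSq_I, one_mul, normSq_ofReal, Real.mul_self_sqrt (abs_nonneg _)]

lemma conj_sqrtD (D : ℝ) : conj (sqrtD D) = -sqrtD D := by
  simp [sqrtD]

section Integers

variable {D : ℤ}

lemma omegaD_mem_OO : omegaD D ∈ OO D := Subring.subset_closure rfl

lemma sqrtD_mem_OO : sqrtD D ∈ OO D := by
  have h : sqrtD D = omegaD D + omegaD D - D := by rw [omegaD]; ring
  rw [h]
  exact sub_mem (add_mem omegaD_mem_OO omegaD_mem_OO) (intCast_mem _ D)

lemma conj_omegaD : conj (omegaD D) = D - omegaD D := by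
  rw [omegaD, map_div₀, map_add, conj_sqrtD, map_intCast, map_ofNat]
  ring

lemma conj_mem_OO {x : ℂ} (hx : x ∈ OO D) : conj x ∈ OO D := by
  have hle : OO D ≤ (OO D).comap (starRingEnd ℂ) := by
    refine Subring.closure_le.mpr ?_
    rintro y rfl
    rw [SetLike.mem_coe, Subring.mem_comap, conj_omegaD]
    exact sub_mem (intCast_mem _ D) omegaD_mem_OO
  exact hle hx

end Integers

section Form

variable (D : ℝ) (n p q : ℂ)

lemma Qform_e₁ : Qform D ![1, 0, 0] ![n, p, q] = q / sqrtD D := by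
  simp [Qform, formC, mulVec, dotProduct, Fin.sum_univ_three, div_eq_inv_mul]

lemma sq_norm_Qform_e₁ : ‖Qform D ![1, 0, 0] ![n, p, q]‖ ^ 2 = normSq q / |D| := by
  rw [Qform_e₁, Complex.sq_norm, normSq_div, normSq_sqrtD]

lemma sqrtD_mul_Qform_self (hD : D ≠ 0) :
    sqrtD D * Qform D ![n, p, q] ![n, p, q] = conj n * q - conj q * n + sqrtD D * (conj p * p) := by
  have hs := sqrtD_ne_zero hD
  simp [Qform, formC, mulVec, dotProduct, Fin.sum_univ_three]
  field_simp
  ring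

end Form

section HeisenbergTranslation

def heisenbergTranslation (s a b : ℂ) : Matrix (Fin 3) (Fin 3) ℂ :=
  !![1, -(s * conj a), s * conj a * a - b; 0, 1, -a; 0, 0, 1]

variable {s a b : ℂ}

lemma det_heisenbergTranslation : (heisenbergTranslation s a b).det = 1 := by
  simp [heisenbergTranslation, det_fin_three]

lemma heisenbergTranslation_mulVec_e₁ : heisenbergTranslation s a b *ᵥ ![1, 0, 0] = ![1, 0, 0] := by
  ext i
  fin_cases i <;> simp [heisenbergTranslation]

lemma heisenbergTranslation_mulVec : heisenbergTranslation s a b *ᵥ ![b, a, 1] = ![0, 0, 1] := by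
  ext i
  fin_cases i <;> simp [heisenbergTranslation]
  ring

lemma heisenbergTranslation_mem {R : Subring ℂ} (hR : ∀ x ∈ R, conj x ∈ R)
    (hs : s ∈ R) (ha : a ∈ R) (hb : b ∈ R) (i j : Fin 3) : heisenbergTranslation s a b i j ∈ R := by
  have hsa : s * conj a ∈ R := mul_mem hs (hR a ha)
  fin_cases i <;> fin_cases j <;> simp [heisenbergTranslation, ha, hsa, hb, sub_mem, mul_mem]

lemma heisenbergTranslation_isometry (hs0 : s ≠ 0) (hs : conj s = -s)
    (hab : conj b - b + s * (conj a * a) = 0) :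
    (heisenbergTranslation s a b)ᴴ * !![0, 0, 1 / s; 0, 1, 0; -(1 / s), 0, 0] *
      heisenbergTranslation s a b = !![0, 0, 1 / s; 0, 1, 0; -(1 / s), 0, 0] := by
  ext i j
  fin_cases i <;> fin_cases j <;>
    simp [heisenbergTranslation, mul_apply, Fin.sum_univ_three, hs]
  all_goals field_simp
  all_goals first | ring1 | linear_combination -hab

end HeisenbergTranslation

theorem stmt18_general (D : ℤ) (hD : D < 0)
    (n p q : ℂ) (hn : n ∈ OO D) (hp : p ∈ OO D) (hq : q ∈ OO D)
    (hiso : Qform (D : ℝ) ![n, p, q] ![n, p, q] = 0)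
    (hinner : ‖Qform (D : ℝ) ![1, 0, 0] ![n, p, q]‖ ^ 2 = 1 / |(D : ℝ)|) :
    ∃ γ : Matrix (Fin 3) (Fin 3) ℂ,
      (∀ i j, γ i j ∈ OO D) ∧ γ.det = 1 ∧
      γᴴ * formC (D : ℝ) * γ = formC (D : ℝ) ∧
      (∃ c : ℂ, γ.mulVec ![1, 0, 0] = c • ![1, 0, 0]) ∧
      (∃ e e' : ℂ, e ∈ OO D ∧ e' ∈ OO D ∧ e * e' = 1 ∧
        γ.mulVec ![n, p, q] = e • ![0, 0, 1]) := by
  have hD0 : (D : ℝ) ≠ 0 := by exact_mod_cast hD.ne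
  have hunit : q * conj q = 1 := by
    rw [sq_norm_Qform_e₁, div_left_inj' (abs_ne_zero.mpr hD0)] at hinner
    rw [mul_conj, hinner, ofReal_one]
  have hrel := sqrtD_mul_Qform_self _ n p q hD0
  rw [hiso, mul_zero] at hrel
  have hv : ![n, p, q] = q • ![conj q * n, conj q * p, 1] := by
    ext i
    fin_cases i <;> simp [← mul_assoc, hunit]
  refine ⟨heisenbergTranslation (sqrtD D) (conj q * p) (conj q * n),
    heisenbergTranslation_mem (fun _ ↦ conj_mem_OO) sqrtD_mem_OO
      (mul_mem (conj_mem_OO hq) hp) (mul_mem (conj_mem_OO hq) hn),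
    det_heisenbergTranslation,
    heisenbergTranslation_isometry (sqrtD_ne_zero hD0) (conj_sqrtD _) ?_,
    ⟨1, by rw [heisenbergTranslation_mulVec_e₁, one_smul]⟩,
    ⟨q, conj q, hq, conj_mem_OO hq, hunit, ?_⟩⟩
  · simp only [map_mul, conj_conj]
    linear_combination -hrel + sqrtD D * conj p * p * hunit
  · rw [hv, mulVec_smul, heisenbergTranslation_mulVec]

theorem stmt18 (D : ℤ) (hD : D < 0)
    (hdisc : D % 4 = 1 ∨ (4 : ℤ) ∣ D)
    (hpid : ∀ I : Ideal (OO D), I.IsPrincipal)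
    (n p q : ℂ) (hn : n ∈ OO D) (hp : p ∈ OO D) (hq : q ∈ OO D)
    (hprim : ∃ a b c : ℂ, a ∈ OO D ∧ b ∈ OO D ∧ c ∈ OO D ∧ a * n + b * p + c * q = 1)
    (hiso : Qform (D : ℝ) ![n, p, q] ![n, p, q] = 0)
    (hinner : ‖Qform (D : ℝ) ![1, 0, 0] ![n, p, q]‖ ^ 2 = 1 / |(D : ℝ)|) :
    ∃ γ : Matrix (Fin 3) (Fin 3) ℂ,
      (∀ i j, γ i j ∈ OO D) ∧ γ.det = 1 ∧
      γᴴ * formC (D : ℝ) * γ = formC (D : ℝ) ∧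
      (∃ c : ℂ, γ.mulVec ![1, 0, 0] = c • ![1, 0, 0]) ∧
      (∃ e e' : ℂ, e ∈ OO D ∧ e' ∈ OO D ∧ e * e' = 1 ∧
        γ.mulVec ![n, p, q] = e • ![0, 0, 1]) :=
  stmt18_general D hD n p q hn hp hq hiso hinner
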